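/- Let α, β be real numbers with 2 < α < 3 and 3 < β < 4, and set p₋ = (β+1−√((β+1)(β−3)))/(2β) and p₊ = (β+1+√((β+1)(β−3)))/(2β). If the conditions (C5a) f_β((α−1)/α) = p₊, (C5b) f_α(p₋) = (α−1)/α, (C5c) f_α((β−1)/β) = p₋, (C5d) f_α(1/β) = p₋, and (C5e) f_α(p₊) = 1/β all hold, then β = 2α − 1 and α satisfies the cubic equation 2α³ − 6α² + 4α − 1 = 0 (equivalently, 2(α−1)³ − 2(α−1) − 1 = 0). -/

import Mathlib

/-! The hypotheses (C5a) and (C5d) give `p₊ = β(α−1)/α²` and `p₋ = α(β−1)/β²`, while `p₋, p₊` are the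
two points of the 2-cycle of `f_β`, the roots of `βx² − (β+1)x + (β+1)/β`. Their product yields
`α(β²−2β−1) = β(β−1)`; with it, `p₋` being a root becomes `(β−3)(β³−3β²−β−1) = 0`. Since `β > 3`, `β` is a
root of the cubic, and the difference of the two relations factors as `(β−2α+1)(β²−2β−1) = 0`. -/

/-- The logistic map `f_γ(x) = γ·x·(1−x)`. -/
def logistic (γ x : ℝ) : ℝ := γ * x * (1 - x)

theorem logistic_one_sub (γ x : ℝ) : logistic γ (1 - x) = logistic γ x := by
  unfold logistic; ring

theorem logistic_one_div (γ : ℝ) {c : ℝ} (hc : c ≠ 0) :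
    logistic γ (1 / c) = γ * (c - 1) / c ^ 2 := by
  unfold logistic; field_simp

theorem logistic_sub_one_div (γ : ℝ) {c : ℝ} (hc : c ≠ 0) :
    logistic γ ((c - 1) / c) = γ * (c - 1) / c ^ 2 := by
  rw [← logistic_one_div γ hc, ← logistic_one_sub, one_sub_div hc]
  ring_nf

section TwoCycle

variable {β : ℝ}

theorem twoCycle_quadratic_eq_zero (hβ : 3 ≤ β) {x : ℝ}
    (hx : x = (β + 1 + √((β + 1) * (β - 3))) / (2 * β) ∨
      x = (β + 1 - √((β + 1) * (β - 3))) / (2 * β)) :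
    β * (x * x) + -(β + 1) * x + (β + 1) / β = 0 := by
  have hβ0 : β ≠ 0 := by positivity
  have hdiscrim : discrim β (-(β + 1)) ((β + 1) / β) =
      √((β + 1) * (β - 3)) * √((β + 1) * (β - 3)) := by
    rw [Real.mul_self_sqrt (by nlinarith), discrim]
    field_simp
    ring
  rwa [quadratic_eq_zero_iff hβ0 hdiscrim, neg_neg]

theorem twoCycle_mul (hβ : 3 ≤ β) :
    (β + 1 - √((β + 1) * (β - 3))) / (2 * β) * ((β + 1 + √((β + 1) * (β - 3))) / (2 * β)) =
      (β + 1) / β ^ 2 := by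
  have hβ0 : β ≠ 0 := by positivity
  have hsq := Real.mul_self_sqrt (show 0 ≤ (β + 1) * (β - 3) by nlinarith)
  field_simp
  linear_combination -hsq

end TwoCycle

section FivePoint

variable {α β : ℝ}

theorem mul_eq_of_twoCycle_mul (hα : α ≠ 0) (hβ : β ≠ 0)
    (h : α * (β - 1) / β ^ 2 * (β * (α - 1) / α ^ 2) = (β + 1) / β ^ 2) :
    α * (β ^ 2 - 2 * β - 1) = β * (β - 1) := by
  field_simp at h
  linear_combination h

/-- With `y = βp` and `t = (β−1)²`, the relation `α(β²−2β−1) = β(β−1)` reads `y·(t−2) = t` and the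
quadratic becomes `y² − (β+1)y + (β+1) = 0`; eliminating `y` gives `t² = 2(β+1)(t−2)`. -/
theorem cubic_eq_zero_of_twoCycle_root (hβ : β ≠ 0) (hβ3 : β ≠ 3)
    (hαβ : α * (β ^ 2 - 2 * β - 1) = β * (β - 1)) {p : ℝ} (hp : p = α * (β - 1) / β ^ 2)
    (hroot : β * (p * p) + -(β + 1) * p + (β + 1) / β = 0) :
    β ^ 3 - 3 * β ^ 2 - β - 1 = 0 := by
  have hy : (β * p) ^ 2 - (β + 1) * (β * p) + (β + 1) = 0 := by
    field_simp at hroot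
    linear_combination hroot
  have hyD : β * p * (β ^ 2 - 2 * β - 1) = (β - 1) ^ 2 := by
    rw [hp]
    field_simp
    linear_combination (β - 1) * hαβ
  have hquartic : (β - 3) * (β ^ 3 - 3 * β ^ 2 - β - 1) = 0 := by
    linear_combination (β ^ 2 - 2 * β - 1) ^ 2 * hy -
      (β * p * (β ^ 2 - 2 * β - 1) + (β - 1) ^ 2 - (β + 1) * (β ^ 2 - 2 * β - 1)) * hyD
  exact (mul_eq_zero.mp hquartic).resolve_left (sub_ne_zero.mpr hβ3)

end FivePoint

theorem logistic_IFS_five_point_cubics_general (α β : ℝ)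
    (hα1 : 2 < α) (hβ1 : 3 < β)
    (pm pp : ℝ)
    (hpm : pm = (β + 1 - Real.sqrt ((β + 1) * (β - 3))) / (2 * β))
    (hpp : pp = (β + 1 + Real.sqrt ((β + 1) * (β - 3))) / (2 * β))
    (hC5a : logistic β ((α - 1) / α) = pp)
    (hC5d : logistic α (1 / β) = pm) :
    β = 2 * α - 1 ∧
    2 * α ^ 3 - 6 * α ^ 2 + 4 * α - 1 = 0 ∧
    2 * (α - 1) ^ 3 - 2 * (α - 1) - 1 = 0 := by
  have hα0 : α ≠ 0 := by positivity
  have hβ0 : β ≠ 0 := by positivity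
  have hpm' : pm = α * (β - 1) / β ^ 2 := by rw [← hC5d, logistic_one_div α hβ0]
  have hpp' : pp = β * (α - 1) / α ^ 2 := by rw [← hC5a, logistic_sub_one_div β hα0]
  have hαβ : α * (β ^ 2 - 2 * β - 1) = β * (β - 1) := by
    apply mul_eq_of_twoCycle_mul hα0 hβ0
    rw [← hpm', ← hpp', hpm, hpp, twoCycle_mul hβ1.le]
  have hcubic := cubic_eq_zero_of_twoCycle_root hβ0 hβ1.ne' hαβ hpm'
    (twoCycle_quadratic_eq_zero hβ1.le (Or.inr hpm))
  have hβα : β = 2 * α - 1 := by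
    have hfac : (β - 2 * α + 1) * (β ^ 2 - 2 * β - 1) = 0 := by
      linear_combination hcubic - 2 * hαβ
    have hD : β ^ 2 - 2 * β - 1 ≠ 0 := by nlinarith
    linarith [(mul_eq_zero.mp hfac).resolve_right hD]
  subst hβα
  exact ⟨rfl, by linear_combination hcubic / 4, by linear_combination hcubic / 4⟩

/-- If `2 < α < 3`, `3 < β < 4`, and conditions (C5a)–(C5e) hold, then `β = 2α − 1`
and `α` satisfies `2α³ − 6α² + 4α − 1 = 0` (equivalently `2(α−1)³ − 2(α−1) − 1 = 0`). -/
theorem logistic_IFS_five_point_cubics (α β : ℝ)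
    (hα1 : 2 < α) (hα2 : α < 3) (hβ1 : 3 < β) (hβ2 : β < 4)
    (pm pp : ℝ)
    (hpm : pm = (β + 1 - Real.sqrt ((β + 1) * (β - 3))) / (2 * β))
    (hpp : pp = (β + 1 + Real.sqrt ((β + 1) * (β - 3))) / (2 * β))
    (hC5a : logistic β ((α - 1) / α) = pp)
    (hC5b : logistic α pm = (α - 1) / α)
    (hC5c : logistic α ((β - 1) / β) = pm)
    (hC5d : logistic α (1 / β) = pm)
    (hC5e : logistic α pp = 1 / β) :
    β = 2 * α - 1 ∧
    2 * α ^ 3 - 6 * α ^ 2 + 4 * α - 1 = 0 ∧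
    2 * (α - 1) ^ 3 - 2 * (α - 1) - 1 = 0 :=
  logistic_IFS_five_point_cubics_general α β hα1 hβ1 pm pp hpm hpp hC5a hC5d
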